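/- Under the same setup (X contains an intercept column, i ≥ 2, Var(X_i) > 0), Stewart's index decomposes as S_i² = VIF(i) + n·X̄_i² / SSR_i, where X̄_i is the sample mean of column i. In particular S_i² = VIF(i) if and only if X̄_i = 0. -/

import Mathlib

/-!
Splitting `Xᵢ` into its mean and its centred part gives `XᵢᵀXᵢ = n·Var(Xᵢ) + n·X̄ᵢ²`; dividing by
`SSRᵢ` yields the decomposition. For the equivalence one needs `SSRᵢ ≠ 0`: `SSRᵢ` is the squared
norm of the residual of `Xᵢ` after projecting onto the other columns, which is nonzero because the
columns of `X` are linearly independent.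
-/

open Matrix

theorem sum_sq_eq_sum_sub_mean_sq_add {ι : Type*} [Fintype ι] (x : ι → ℝ) :
    ∑ r, x r ^ 2 = ∑ r, (x r - (∑ r, x r) / Fintype.card ι) ^ 2
      + Fintype.card ι * ((∑ r, x r) / Fintype.card ι) ^ 2 := by
  set μ := (∑ r, x r) / Fintype.card ι
  have hμ : Fintype.card ι * μ ^ 2 = μ * ∑ r, x r := by
    rcases isEmpty_or_nonempty ι with hι | hι
    · simp
    · rw [sq, ← mul_assoc, mul_div_cancel₀ _ (by positivity), mul_comm]
  clear_value μ
  simp only [sub_sq, Finset.sum_add_distrib, Finset.sum_sub_distrib, ← Finset.mul_sum,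
    ← Finset.sum_mul, Finset.sum_const, Finset.card_univ, nsmul_eq_mul]
  linear_combination -2 * hμ

namespace Matrix

theorem col_notMem_range_mulVecLin_submatrix_ne {R m ι : Type*} [CommRing R] [Nontrivial R]
    [Fintype ι] [DecidableEq ι] {X : Matrix m ι R} (hX : LinearIndependent R Xᵀ) (i : ι) :
    (fun r => X r i) ∉
      LinearMap.range (X.submatrix id (Subtype.val : {j // j ≠ i} → ι)).mulVecLin := by
  have hcols : Set.range (X.submatrix id (Subtype.val : {j // j ≠ i} → ι)).col = Xᵀ '' {i}ᶜ :=
    (Set.range_comp (g := fun j => Xᵀ j) Subtype.val).trans (by rw [Subtype.range_coe_subtype]; rfl)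
  rw [range_mulVecLin, hcols]
  exact hX.notMem_span_image (by simp)

section LeastSquares

variable {m ι : Type*} [Fintype m] [Fintype ι]

theorem dotProduct_self_sub_dotProduct_mulVec_of_orthogonal (A : Matrix m ι ℝ) {v : m → ℝ}
    {w : ι → ℝ} (h : Aᵀ *ᵥ (v - A *ᵥ w) = 0) :
    v ⬝ᵥ v - v ⬝ᵥ (A *ᵥ w) = (v - A *ᵥ w) ⬝ᵥ (v - A *ᵥ w) := by
  have horth : (A *ᵥ w) ⬝ᵥ (v - A *ᵥ w) = 0 := by
    rw [dotProduct_comm, dotProduct_mulVec, ← mulVec_transpose, h, zero_dotProduct]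
  rw [sub_dotProduct, horth, sub_zero, dotProduct_sub]

variable [DecidableEq ι]

/-- The paper's `SSR`: the residual sum of squares of the least-squares regression of `v` on the
columns of `A`. -/
noncomputable def residualSumSq (A : Matrix m ι ℝ) (v : m → ℝ) : ℝ :=
  v ⬝ᵥ v - v ⬝ᵥ (A *ᵥ ((Aᵀ * A)⁻¹ *ᵥ (Aᵀ *ᵥ v)))

theorem isUnit_transpose_mul_self {A : Matrix m ι ℝ} (hA : LinearIndependent ℝ Aᵀ) :
    IsUnit (Aᵀ * A) := by
  have hpos := PosDef.conjTranspose_mul_self A (mulVec_injective_iff.2 hA)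
  rw [conjTranspose_eq_transpose_of_trivial] at hpos
  exact hpos.isUnit

theorem transpose_mulVec_leastSquaresResidual_eq_zero {A : Matrix m ι ℝ} (hA : LinearIndependent ℝ Aᵀ)
    (v : m → ℝ) : Aᵀ *ᵥ (v - A *ᵥ ((Aᵀ * A)⁻¹ *ᵥ (Aᵀ *ᵥ v))) = 0 := by
  rw [mulVec_sub, mulVec_mulVec, mulVec_mulVec,
    mul_nonsing_inv _ ((isUnit_iff_isUnit_det _).1 (isUnit_transpose_mul_self hA)),
    one_mulVec, sub_self]

theorem residualSumSq_pos {A : Matrix m ι ℝ} (hA : LinearIndependent ℝ Aᵀ) {v : m → ℝ}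
    (hv : v ∉ LinearMap.range A.mulVecLin) : 0 < A.residualSumSq v := by
  rw [residualSumSq, dotProduct_self_sub_dotProduct_mulVec_of_orthogonal A
    (transpose_mulVec_leastSquaresResidual_eq_zero hA v)]
  have hres : v - A *ᵥ ((Aᵀ * A)⁻¹ *ᵥ (Aᵀ *ᵥ v)) ≠ 0 := fun h =>
    hv ⟨_, (sub_eq_zero.1 h).symm⟩
  simpa [star_trivial] using dotProduct_self_star_pos_iff.2 hres

end LeastSquares

end Matrix

theorem stewart_decomposition_general {n k : ℕ}
    (X : Matrix (Fin n) (Fin k) ℝ) (hrank : LinearIndependent ℝ Xᵀ)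
    (i : Fin k) :
    let Xi : Fin n → ℝ := fun r => X r i
    let Xbar : ℝ := (∑ r, Xi r) / n
    let Var : ℝ := (∑ r, (Xi r - Xbar) ^ 2) / n
    let Xmi : Matrix (Fin n) {j : Fin k // j ≠ i} ℝ :=
      X.submatrix id (fun j => (j : Fin k))
    let SSR : ℝ := Xi ⬝ᵥ Xi - Xi ⬝ᵥ (Xmi *ᵥ ((Xmiᵀ * Xmi)⁻¹ *ᵥ (Xmiᵀ *ᵥ Xi)))
    let VIF : ℝ := (n * Var) / SSR
    let S2 : ℝ := (Xi ⬝ᵥ Xi) / SSR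
    0 < Var →
      S2 = VIF + (n * Xbar ^ 2) / SSR ∧ (S2 = VIF ↔ Xbar = 0) := by
  intro Xi Xbar Var Xmi SSR VIF S2 hVar
  have hn : (n : ℝ) ≠ 0 := by
    -- for `n = 0` the variance is `_ / 0 = 0`
    rintro hn
    simp [Var, hn] at hVar
  have hSSR : 0 < SSR :=
    residualSumSq_pos (hrank.comp (Subtype.val : {j // j ≠ i} → Fin k) Subtype.val_injective)
      (col_notMem_range_mulVecLin_submatrix_ne hrank i)
  have hdecomp : S2 = VIF + (n * Xbar ^ 2) / SSR := by
    have hsplit := sum_sq_eq_sum_sub_mean_sq_add Xi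
    rw [Fintype.card_fin] at hsplit
    simp only [S2, VIF, Var, ← add_div, mul_div_cancel₀ _ hn, dotProduct, ← sq]
    exact congrArg (· / SSR) hsplit
  refine ⟨hdecomp, ?_⟩
  rw [hdecomp, add_eq_left, div_eq_zero_iff, mul_eq_zero]
  simp [hn, hSSR.ne']

/-- With an intercept column, i ≥ 2 and Var(X_i) > 0, Stewart's index
decomposes as S_i² = VIF(i) + n·X̄_i²/SSR_i; in particular S_i² = VIF(i) iff X̄_i = 0. -/
theorem stewart_decomposition {n k : ℕ} (hn : 0 < n) (hk : 0 < k)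
    (X : Matrix (Fin n) (Fin k) ℝ) (hrank : LinearIndependent ℝ Xᵀ)
    (hones : ∀ r, X r ⟨0, hk⟩ = 1)
    (i : Fin k) (hi : i ≠ ⟨0, hk⟩) :
    let Xi : Fin n → ℝ := fun r => X r i
    let Xbar : ℝ := (∑ r, Xi r) / n
    let Var : ℝ := (∑ r, (Xi r - Xbar) ^ 2) / n
    let Xmi : Matrix (Fin n) {j : Fin k // j ≠ i} ℝ :=
      X.submatrix id (fun j => (j : Fin k))
    let SSR : ℝ := Xi ⬝ᵥ Xi - Xi ⬝ᵥ (Xmi *ᵥ ((Xmiᵀ * Xmi)⁻¹ *ᵥ (Xmiᵀ *ᵥ Xi)))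
    let VIF : ℝ := (n * Var) / SSR
    let S2 : ℝ := (Xi ⬝ᵥ Xi) / SSR
    0 < Var →
      S2 = VIF + (n * Xbar ^ 2) / SSR ∧ (S2 = VIF ↔ Xbar = 0) :=
  stewart_decomposition_general X hrank i
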